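/- Let \(L \subset \mathbb{Z}^3\) be the lattice generated by \((1,0,3)\), \((0,2,5)\), \((0,0,10)\), and let \(V^* = \{v \in \mathbb{Z}^3 : d(v,V) \le 1\}\) where \(V = \{(0,0,0),(1,0,0),(0,1,0),(1,1,0)\}\) and \(d\) is the \(\ell_1\) distance. Then the translates \(V^* + z\) for \(z \in L\) partition \(\mathbb{Z}^3\): every point of \(\mathbb{Z}^3\) lies in exactly one translate \(V^* + z\). -/

import Mathlib

def dist1 (u v : ℤ × ℤ × ℤ) : ℤ :=
  |u.1 - v.1| + |u.2.1 - v.2.1| + |u.2.2 - v.2.2|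

def Vsq : Set (ℤ × ℤ × ℤ) := {(0,0,0), (1,0,0), (0,1,0), (1,1,0)}

def Vstar : Set (ℤ × ℤ × ℤ) := {v | ∃ w ∈ Vsq, dist1 v w ≤ 1}

def Λ : SimpleGraph (ℤ × ℤ × ℤ) where
  Adj u v := dist1 u v = 1
  symm := by
    constructor
    intro u v h
    simpa [dist1, abs_sub_comm] using h
  loopless := by
    constructor
    intro u h
    simp [dist1] at h

def IsPDS (S : Set (ℤ × ℤ × ℤ)) : Prop :=
  ∀ v ∉ S, ∃! w, w ∈ S ∧ dist1 v w = 1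

def comp (S : Set (ℤ × ℤ × ℤ)) (v : ℤ × ℤ × ℤ) : Set (ℤ × ℤ × ℤ) :=
  {w | ∃ (hv : v ∈ S) (hw : w ∈ S), (Λ.induce S).Reachable ⟨v, hv⟩ ⟨w, hw⟩}

def AllComponentsFourCycles (S : Set (ℤ × ℤ × ℤ)) : Prop :=
  ∀ v ∈ S, (comp S v).ncard = 4 ∧
    ∀ w ∈ comp S v, {u ∈ comp S v | dist1 w u = 1}.ncard = 2

/-!
The lattice is the kernel of the character `p ↦ 2 p₃ - 6 p₁ - 5 p₂ mod 20` of `ℤ³`, and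
`V* = V + B` with `B` the `ℓ₁` unit ball. The 20 points of `V*` take all 20 values of this
character, so `V*` is a system of coset representatives of `ℤ³ / L`, which is the tiling.
-/

open Pointwise

theorem AddMonoidHom.existsUnique_mem_ker_sub_mem {G H : Type*} [AddCommGroup G] [AddGroup H]
    (φ : G →+ H) {S : Set G} (hS : Set.BijOn φ S Set.univ) (v : G) :
    ∃! z, z ∈ φ.ker ∧ v - z ∈ S := by
  obtain ⟨s, hs, hφs⟩ := hS.surjOn (Set.mem_univ (φ v))
  refine ⟨v - s, ⟨?_, by rwa [sub_sub_cancel]⟩, ?_⟩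
  · rw [AddMonoidHom.mem_ker, map_sub, hφs, sub_self]
  · rintro z ⟨hz, hvz⟩
    have : v - z = s := hS.injOn hvz hs (by rw [map_sub, hz, sub_zero, hφs])
    rw [← this, sub_sub_cancel]

theorem Finset.bijOn_univ_of_image_eq_univ {α β : Type*} [DecidableEq β] [Fintype β]
    {f : α → β} {s : Finset α} (himage : s.image f = univ) (hcard : s.card = Fintype.card β) :
    Set.BijOn f s Set.univ := by
  refine ⟨fun _ _ ↦ Set.mem_univ _, ?_, fun b _ ↦ ?_⟩
  · rw [← Finset.card_image_iff, himage, hcard, Finset.card_univ]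
  · simp [← Finset.coe_image, himage]

def latticeForm : ℤ × ℤ × ℤ →+ ZMod 20 where
  toFun p := ((2 * p.2.2 - 6 * p.1 - 5 * p.2.1 : ℤ) : ZMod 20)
  map_zero' := by simp
  map_add' p q := by simp only [Prod.fst_add, Prod.snd_add]; push_cast; ring

theorem closure_eq_ker_latticeForm :
    AddSubgroup.closure {((1:ℤ),(0:ℤ),(3:ℤ)), (0,2,5), (0,0,10)} = latticeForm.ker := by
  refine le_antisymm (AddSubgroup.closure_le _ |>.mpr ?_) fun ⟨x, y, z⟩ hp ↦ ?_
  · rintro p (rfl | rfl | rfl) <;> exact AddMonoidHom.mem_ker.mpr (by decide)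
  · obtain ⟨k, hk⟩ := (ZMod.intCast_zmod_eq_zero_iff_dvd _ 20).mp hp
    -- `y` is even because `5 y ≡ 2 z - 6 x (mod 20)`.
    have hdecomp : (x, y, z) = x • ((1:ℤ),(0:ℤ),(3:ℤ)) + (y / 2) • ((0:ℤ),(2:ℤ),(5:ℤ)) +
        k • ((0:ℤ),(0:ℤ),(10:ℤ)) := by
      simp only [Nat.cast_ofNat] at hk
      simp only [Prod.smul_mk, smul_eq_mul, Prod.mk_add_mk, Prod.ext_iff]
      omega
    rw [hdecomp]
    refine add_mem (add_mem ?_ ?_) ?_ <;>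
      exact AddSubgroup.zsmul_mem _ (AddSubgroup.subset_closure (by simp)) _

def unitBall : Finset (ℤ × ℤ × ℤ) :=
  {0, (1,0,0), (-1,0,0), (0,1,0), (0,-1,0), (0,0,1), (0,0,-1)}

theorem dist1_le_one_iff {v w : ℤ × ℤ × ℤ} : dist1 v w ≤ 1 ↔ v - w ∈ unitBall := by
  obtain ⟨a, b, c⟩ := v; obtain ⟨d, e, f⟩ := w
  simp only [dist1, unitBall, Finset.mem_insert, Finset.mem_singleton, Prod.mk_sub_mk,
    Prod.ext_iff, Prod.fst_zero, Prod.snd_zero]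
  constructor
  · intro h
    rcases abs_cases (a - d) with ⟨h1,_⟩|⟨h1,_⟩ <;>
    rcases abs_cases (b - e) with ⟨h2,_⟩|⟨h2,_⟩ <;>
    rcases abs_cases (c - f) with ⟨h3,_⟩|⟨h3,_⟩ <;>
    rw [h1, h2, h3] at h <;> omega
  · rintro (h | h | h | h | h | h | h) <;> simp_all

def squareFinset : Finset (ℤ × ℤ × ℤ) := {(0,0,0), (1,0,0), (0,1,0), (1,1,0)}

def VstarFinset : Finset (ℤ × ℤ × ℤ) := squareFinset + unitBall

theorem Vstar_eq_coe_VstarFinset : Vstar = VstarFinset := by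
  ext v
  have hVsq : Vsq = squareFinset := by simp [Vsq, squareFinset]
  simp only [Vstar, VstarFinset, hVsq, dist1_le_one_iff, Finset.coe_add, Set.mem_add,
    Finset.mem_coe]
  exact ⟨fun ⟨w, hw, hvw⟩ ↦ ⟨w, hw, v - w, hvw, add_sub_cancel w v⟩,
    fun ⟨w, hw, u, hu, hwu⟩ ↦ ⟨w, hw, hwu ▸ (add_sub_cancel_left w u).symm ▸ hu⟩⟩

theorem card_VstarFinset : VstarFinset.card = 20 := by decide

theorem image_latticeForm_VstarFinset : VstarFinset.image latticeForm = Finset.univ := by decide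

theorem stmt6 (v : ℤ × ℤ × ℤ) :
    ∃! z : ℤ × ℤ × ℤ,
      z ∈ AddSubgroup.closure {((1:ℤ),(0:ℤ),(3:ℤ)), (0,2,5), (0,0,10)} ∧ v - z ∈ Vstar := by
  rw [closure_eq_ker_latticeForm, Vstar_eq_coe_VstarFinset]
  exact latticeForm.existsUnique_mem_ker_sub_mem
    (Finset.bijOn_univ_of_image_eq_univ image_latticeForm_VstarFinset card_VstarFinset) v
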